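/- In a sectionally pseudocomplemented lattice (L, ⊔, ⊓, *), the term q(x, y, z) := (x ⊔ z) ⊓ ((x*y)*z) ⊓ (y*x) is a Maltsev term, i.e. q(x, x, z) = z and q(x, z, z) = x hold for all x, z ∈ L. -/

import Mathlib

/-!
Every `a * a` is the top element, and `(a * a) * z = z`; this gives `q(x, x, z) = z`.
For `q(x, z, z)`, the inequality `x ⊔ z ≤ (x * z) * z` removes the middle factor, leaving
`(z ⊔ x) ⊓ (z * x) = x`.
-/

/-- A binary operation `star` makes the lattice `L` sectionally pseudocomplemented if
for all `a b`, `star a b` is the greatest element `c` with `(a ⊔ b) ⊓ c = b`. -/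
def IsSPLattice {L : Type*} [Lattice L] (star : L → L → L) : Prop :=
  ∀ a b : L, (a ⊔ b) ⊓ star a b = b ∧ ∀ c : L, (a ⊔ b) ⊓ c = b → c ≤ star a b

namespace IsSPLattice

variable {L : Type*} [Lattice L] {star : L → L → L}

theorem sup_inf_star (h : IsSPLattice star) (a b : L) : (a ⊔ b) ⊓ star a b = b :=
  (h a b).1

theorem le_star_of_sup_inf_eq (h : IsSPLattice star) {a b c : L} (hc : (a ⊔ b) ⊓ c = b) :
    c ≤ star a b :=
  (h a b).2 c hc

theorem right_le_star (h : IsSPLattice star) (a b : L) : b ≤ star a b :=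
  (h.sup_inf_star a b).ge.trans inf_le_right

theorem le_star_self (h : IsSPLattice star) (a c : L) : c ≤ star a a :=
  le_sup_right.trans <| h.le_star_of_sup_inf_eq (by simp : (a ⊔ a) ⊓ (a ⊔ c) = a)

theorem star_star_self (h : IsSPLattice star) (a b : L) : star (star a a) b = b := by
  have key := h.sup_inf_star (star a a) b
  rwa [sup_eq_left.mpr (h.le_star_self a b), inf_eq_right.mpr (h.le_star_self a _)] at key

theorem sup_le_star_star (h : IsSPLattice star) (a b : L) : a ⊔ b ≤ star (star a b) b := by
  apply h.le_star_of_sup_inf_eq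
  rw [sup_eq_left.mpr (h.right_le_star a b), inf_comm]
  exact h.sup_inf_star a b

end IsSPLattice

theorem stmt_13 {L : Type*} [Lattice L] (star : L → L → L) (h : IsSPLattice star)
    (q : L → L → L → L)
    (hq : ∀ x y z : L, q x y z = (x ⊔ z) ⊓ star (star x y) z ⊓ star y x) :
    ∀ x z : L, q x x z = z ∧ q x z z = x := by
  intro x z
  constructor
  · rw [hq, h.star_star_self, inf_eq_right.mpr (le_sup_right : z ≤ x ⊔ z),
      inf_eq_left.mpr (h.le_star_self x z)]
  · rw [hq, inf_eq_left.mpr (h.sup_le_star_star x z), sup_comm]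
    exact h.sup_inf_star z x
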